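/- Define, for a function g : (changepoint sequences) → ℝ, the quantities L(k,t) = Σ_{τ ∈ T(k,t)} g(τ) for 1 ≤ k < m and L(0,t) = 0. Suppose g has the ratio property: for every τ ∈ T(k,t) with τ_{k-1} ≠ b(k-1,t), g(τ) = g(τ') · R(k,t-1), where τ' shifts τ_k,...,τ_{m-1} down by one and R(k,t-1) is a constant depending only on k and t. Then for 1 ≤ k < m and m ≤ t < n: L(k,t) = L(k-1,t) + L(k,t-1) · R(k,t-1). -/

import Mathlib

/-- Changepoint sequences: strictly increasing `τ_0 = 0 < τ_1 < ... < τ_m = n`. -/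
def CP (n m : ℕ) : Set (Fin (m + 1) → ℕ) :=
  {τ | StrictMono τ ∧ τ 0 = 0 ∧ τ (Fin.last m) = n}

open Fin.NatCast in
/-- `T n m k t`: changepoint sequences with `τ (m-1) = t` whose entries at
indices `k, k+1, ..., m-1` are consecutive. -/
def T (n m k t : ℕ) : Set (Fin (m + 1) → ℕ) :=
  {τ | τ ∈ CP n m ∧ τ ((m - 1 : ℕ) : Fin (m + 1)) = t ∧
    ∀ i : ℕ, k ≤ i → i + 1 < m →
      τ ((i + 1 : ℕ) : Fin (m + 1)) = τ ((i : ℕ) : Fin (m + 1)) + 1}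

/-- `b m j t = t - ((m-1) - j)`. -/
def b (m j t : ℕ) : ℕ := t - ((m - 1) - j)

/-!
Split `T(k,t)` according to whether `τ_{k-1}` takes the value `b(k-1,t)`, the only value that
makes the run of consecutive entries start at `k-1`. Those `τ` form exactly `T(k-1,t)`,
which is empty for `k = 1` because `τ_0 = 0 < b(0,t)`. For all other `τ` there is room to
lower `τ_k, …, τ_{m-1}` by one, and this is a bijection onto `T(k,t-1)` whose inverse raises
them again (there is room above since `t < n`). Hence the ratio property turns that part of
the sum into `L(k,t-1) · R(k,t-1)`.
-/

open Fin.NatCast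

lemma Fin.val_natCast_of_le {m i : ℕ} (h : i ≤ m) : ((i : Fin (m + 1)) : ℕ) = i :=
  Fin.val_cast_of_lt (Nat.lt_succ_of_le h)

def shiftTailDown (m k : ℕ) (τ : Fin (m + 1) → ℕ) : Fin (m + 1) → ℕ :=
  fun i => if k ≤ (i : ℕ) ∧ (i : ℕ) < m then τ i - 1 else τ i

def shiftTailUp (m k : ℕ) (τ : Fin (m + 1) → ℕ) : Fin (m + 1) → ℕ :=
  fun i => if k ≤ (i : ℕ) ∧ (i : ℕ) < m then τ i + 1 else τ i

section

variable {n m k t : ℕ} {τ : Fin (m + 1) → ℕ}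

lemma apply_lt_apply_of_mem_CP (hτ : τ ∈ CP n m) {i j : ℕ} (hij : i < j) (hj : j ≤ m) :
    τ i < τ j :=
  hτ.1 <| by rw [Fin.lt_def, Fin.val_natCast_of_le (by omega), Fin.val_natCast_of_le hj]; exact hij

lemma one_le_apply_of_mem_CP (hτ : τ ∈ CP n m) {i : ℕ} (hi : 1 ≤ i) (him : i ≤ m) :
    1 ≤ τ i := by
  have h := apply_lt_apply_of_mem_CP hτ hi him
  rw [Nat.cast_zero, hτ.2.1] at h
  exact h

lemma apply_le_of_mem_CP (hτ : τ ∈ CP n m) (i : Fin (m + 1)) : τ i ≤ n :=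
  hτ.2.2 ▸ hτ.1.monotone (Fin.le_last i)

lemma CP_finite : (CP n m).Finite :=
  (Set.Finite.pi fun _ => Set.finite_Iic n).subset fun _ hτ i _ => apply_le_of_mem_CP hτ i

lemma mem_CP_of_lt_succ (hlt : ∀ i < m, τ i < τ (i + 1 : ℕ)) (h0 : τ 0 = 0)
    (hm : τ (Fin.last m) = n) : τ ∈ CP n m := by
  refine ⟨Fin.strictMono_iff_lt_succ.2 fun i => ?_, h0, hm⟩
  have hi := hlt i i.isLt
  rwa [Fin.coe_eq_castSucc, show ((i + 1 : ℕ) : Fin (m + 1)) = i.succ from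
    Fin.ext (Fin.val_natCast_of_le i.isLt)] at hi

lemma T_finite : (T n m k t).Finite :=
  CP_finite.subset fun _ hτ => hτ.1

lemma apply_eq_b_of_mem_T (hτ : τ ∈ T n m k t) {i : ℕ} (hki : k ≤ i) (him : i < m) :
    τ i = b m i t := by
  suffices h : ∀ d i, i + d = m - 1 → k ≤ i → τ i = b m i t from
    h (m - 1 - i) i (by omega) hki
  intro d
  induction d with
  | zero =>
    intro i hi _
    rw [show i = m - 1 by omega, hτ.2.1]
    simp [b]
  | succ d ih =>
    intro i hi hki
    have h := hτ.2.2 i hki (by omega)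
    rw [ih (i + 1) (by omega) (by omega)] at h
    unfold b at h ⊢
    omega

lemma T_zero_eq_empty (hm : 0 < m) (hmt : m ≤ t) : T n m 0 t = ∅ :=
  Set.eq_empty_of_forall_notMem fun τ hτ => by
    have h := apply_eq_b_of_mem_T hτ le_rfl (by omega)
    rw [Nat.cast_zero, hτ.1.2.1] at h
    unfold b at h
    omega

lemma T_inter_apply_eq_b (hk : 1 ≤ k) (hkm : k < m) :
    T n m k t ∩ {τ | τ (k - 1 : ℕ) = b m (k - 1) t} = T n m (k - 1) t := by
  ext τ
  constructor
  · rintro ⟨hτ, hb : τ (k - 1 : ℕ) = b m (k - 1) t⟩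
    refine ⟨hτ.1, hτ.2.1, fun i hki hi => ?_⟩
    obtain rfl | hki := eq_or_lt_of_le hki
    · have hk1 : τ (k - 1 : ℕ) < τ k := apply_lt_apply_of_mem_CP hτ.1 (by omega) hkm.le
      rw [Nat.sub_add_cancel hk]
      rw [apply_eq_b_of_mem_T hτ le_rfl hkm, hb] at hk1 ⊢
      unfold b at hk1 ⊢
      omega
    · exact hτ.2.2 i (by omega) hi
  · intro hτ
    exact ⟨⟨hτ.1, hτ.2.1, fun i hki hi => hτ.2.2 i (by omega) hi⟩,
      apply_eq_b_of_mem_T hτ le_rfl (by omega)⟩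

lemma shiftTailDown_natCast {i : ℕ} (hi : i ≤ m) :
    shiftTailDown m k τ i = if k ≤ i ∧ i < m then τ i - 1 else τ i := by
  simp only [shiftTailDown, Fin.val_natCast_of_le hi]

lemma shiftTailUp_natCast {i : ℕ} (hi : i ≤ m) :
    shiftTailUp m k τ i = if k ≤ i ∧ i < m then τ i + 1 else τ i := by
  simp only [shiftTailUp, Fin.val_natCast_of_le hi]

lemma shiftTailUp_shiftTailDown (hk : 1 ≤ k) (hτ : τ ∈ CP n m) :
    shiftTailUp m k (shiftTailDown m k τ) = τ := by
  funext i
  by_cases h : k ≤ (i : ℕ) ∧ (i : ℕ) < m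
  · have := one_le_apply_of_mem_CP hτ (i := i) (by omega) (by omega)
    simp only [shiftTailUp, shiftTailDown, if_pos h, Fin.cast_val_eq_self] at this ⊢
    omega
  · simp only [shiftTailUp, shiftTailDown, if_neg h]

lemma shiftTailDown_shiftTailUp : shiftTailDown m k (shiftTailUp m k τ) = τ := by
  funext i
  by_cases h : k ≤ (i : ℕ) ∧ (i : ℕ) < m
  · simp only [shiftTailUp, shiftTailDown, if_pos h, Nat.add_sub_cancel]
  · simp only [shiftTailUp, shiftTailDown, if_neg h]

lemma shiftTailDown_mem_CP (hk : 1 ≤ k) (hτ : τ ∈ CP n m)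
    (hgap : τ (k - 1 : ℕ) + 1 < τ k) : shiftTailDown m k τ ∈ CP n m := by
  refine mem_CP_of_lt_succ (fun i hi => ?_) ?_ ?_
  · have hlt := apply_lt_apply_of_mem_CP hτ i.lt_add_one hi
    rw [shiftTailDown_natCast hi.le, shiftTailDown_natCast (i := i + 1) hi]
    split_ifs with h h'
    · have := one_le_apply_of_mem_CP hτ (i := i) (by omega) (by omega)
      omega
    · omega
    · obtain rfl : k = i + 1 := by omega
      rw [Nat.add_sub_cancel] at hgap
      omega
    · exact hlt
  · simpa [shiftTailDown, show ¬k ≤ 0 by omega] using hτ.2.1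
  · simpa [shiftTailDown] using hτ.2.2

lemma shiftTailUp_mem_CP (hk : 1 ≤ k) (hτ : τ ∈ CP n m) (hgap : τ (m - 1 : ℕ) + 1 < n) :
    shiftTailUp m k τ ∈ CP n m := by
  refine mem_CP_of_lt_succ (fun i hi => ?_) ?_ ?_
  · have hlt := apply_lt_apply_of_mem_CP hτ i.lt_add_one hi
    rw [shiftTailUp_natCast hi.le, shiftTailUp_natCast (i := i + 1) hi]
    split_ifs with h h'
    · omega
    · obtain rfl : m = i + 1 := by omega
      rw [Nat.add_sub_cancel] at hgap
      have hlast : τ (i + 1 : ℕ) = n := by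
        rw [← hτ.2.2]
        exact congrArg τ (Fin.ext (Fin.val_natCast_of_le le_rfl))
      omega
    · omega
    · exact hlt
  · simpa [shiftTailUp, show ¬k ≤ 0 by omega] using hτ.2.1
  · simpa [shiftTailUp] using hτ.2.2

lemma shiftTailDown_mem_T (hk : 1 ≤ k) (hkm : k < m) (hτ : τ ∈ T n m k t)
    (hne : τ (k - 1 : ℕ) ≠ b m (k - 1) t) : shiftTailDown m k τ ∈ T n m k (t - 1) := by
  have hτk := apply_eq_b_of_mem_T hτ le_rfl hkm
  have hτk1 := one_le_apply_of_mem_CP hτ.1 hk hkm.le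
  have hlt := apply_lt_apply_of_mem_CP hτ.1 (Nat.sub_lt hk one_pos) hkm.le
  refine ⟨shiftTailDown_mem_CP hk hτ.1 ?_, ?_, fun i hki hi => ?_⟩
  · unfold b at hne hτk
    omega
  · rw [shiftTailDown_natCast (by omega), if_pos (by omega), hτ.2.1]
  · have := one_le_apply_of_mem_CP hτ.1 (i := i) (by omega) (by omega)
    rw [shiftTailDown_natCast (by omega), shiftTailDown_natCast (by omega), if_pos (by omega),
      if_pos (by omega), hτ.2.2 i hki hi]
    omega

lemma shiftTailUp_mem_T (hk : 1 ≤ k) (hkm : k < m) (htn : t < n) (hτ : τ ∈ T n m k (t - 1)) :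
    shiftTailUp m k τ ∈ T n m k t := by
  have hpos := one_le_apply_of_mem_CP hτ.1 (i := m - 1) (by omega) (by omega)
  have hval : τ (m - 1 : ℕ) = t - 1 := hτ.2.1
  refine ⟨shiftTailUp_mem_CP hk hτ.1 (by omega), ?_, fun i hki hi => ?_⟩
  · rw [shiftTailUp_natCast (by omega), if_pos (by omega), hτ.2.1]
    omega
  · rw [shiftTailUp_natCast (by omega), shiftTailUp_natCast (by omega), if_pos (by omega),
      if_pos (by omega), hτ.2.2 i hki hi]

lemma shiftTailUp_apply_ne_b (hk : 1 ≤ k) (hkm : k < m) (hτ : τ ∈ T n m k (t - 1)) :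
    shiftTailUp m k τ (k - 1 : ℕ) ≠ b m (k - 1) t := by
  have hτk := apply_eq_b_of_mem_T hτ le_rfl hkm
  have hlt := apply_lt_apply_of_mem_CP hτ.1 (Nat.sub_lt hk one_pos) hkm.le
  rw [shiftTailUp_natCast (by omega), if_neg (by omega)]
  unfold b at hτk ⊢
  omega

lemma bijOn_shiftTailDown (hk : 1 ≤ k) (hkm : k < m) (htn : t < n) :
    Set.BijOn (shiftTailDown m k) (T n m k t \ {τ | τ (k - 1 : ℕ) = b m (k - 1) t})
      (T n m k (t - 1)) :=
  Set.InvOn.bijOn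
    ⟨fun _ hτ => shiftTailUp_shiftTailDown hk hτ.1.1, fun _ _ => shiftTailDown_shiftTailUp⟩
    (fun _ hτ => shiftTailDown_mem_T hk hkm hτ.1 hτ.2)
    (fun _ hτ => ⟨shiftTailUp_mem_T hk hkm htn hτ, shiftTailUp_apply_ne_b hk hkm hτ⟩)

end

/-- Abstract recurrence: if `g` satisfies the ratio property (shifting the
consecutive tail of changepoints one step left multiplies `g` by `R k (t-1)`),
then `L k t = L (k-1) t + L k (t-1) * R k (t-1)`, where `L k t = Σ_{τ ∈ T k t} g τ`
for `k ≥ 1` and `L 0 t = 0`. -/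
theorem stmt9 (n m : ℕ) (g : (Fin (m + 1) → ℕ) → ℝ) (R : ℕ → ℕ → ℝ)
    (k t : ℕ) (hk : 1 ≤ k) (hkm : k < m) (hmt : m ≤ t) (htn : t < n)
    (hratio : ∀ τ ∈ T n m k t, τ ((k - 1 : ℕ) : Fin (m + 1)) ≠ b m (k - 1) t →
      g τ = g (fun i => if k ≤ (i : ℕ) ∧ (i : ℕ) < m then τ i - 1 else τ i) *
        R k (t - 1)) :
    (∑ᶠ τ ∈ T n m k t, g τ) =
      (if k - 1 = 0 then 0 else ∑ᶠ τ ∈ T n m (k - 1) t, g τ) +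
        (∑ᶠ τ ∈ T n m k (t - 1), g τ) * R k (t - 1) := by
  have hL0 : (if k - 1 = 0 then 0 else ∑ᶠ τ ∈ T n m (k - 1) t, g τ) =
      ∑ᶠ τ ∈ T n m (k - 1) t, g τ := by
    split_ifs with h
    · rw [h, T_zero_eq_empty (by omega) hmt, finsum_mem_empty]
    · rfl
  rw [hL0, ← finsum_mem_inter_add_sdiff {τ | τ (k - 1 : ℕ) = b m (k - 1) t} T_finite,
    T_inter_apply_eq_b hk hkm, finsum_mem_mul]
  exact congrArg _ <| finsum_mem_eq_of_bijOn _ (bijOn_shiftTailDown hk hkm htn)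
    fun τ hτ => hratio τ hτ.1 hτ.2
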